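/- Let S = {x_1, ..., x_k} be a set of k positive integers. Let G be the graph constructed from S by creating, for each x_i, a connected component consisting of two disjoint cliques C¹_i and C²_i, each of size 2x_i, with a fixed bijection (counterpart map) between them, where each vertex of C¹_i is additionally adjacent to every vertex of C²_i except its counterpart, and taking the disjoint union over i. Let G' be the graph consisting of two disjoint copies G_1 and G_2 of G together with two additional vertices v_1 and v_2, where v_1 is adjacent to every vertex of G_1, v_2 is adjacent to every vertex of G_2, and v_1 is adjacent to v_2. Then S has an equal sum partition if and only if there does not exist an information dominating set in G' of size at most 2k. -/

import Mathlib

open Classical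

/-- A binary opinion profile `μ` on a finite simple graph `G` is valid under the
local majority rule. -/
def IsValidProfile {V : Type*} [Fintype V] (G : SimpleGraph V) (μ : V → Bool) : Prop :=
  ∀ v : V,
    ((G.neighborFinset v).filter fun u => μ u = μ v).card ≥
    ((G.neighborFinset v).filter fun u => μ u ≠ μ v).card

/-- A subset `D` of the vertices is an information dominating set: any two valid
opinion profiles that agree on `D` are equal. -/
def IsIDS {V : Type*} [Fintype V] (G : SimpleGraph V) (D : Set V) : Prop :=
  ∀ μ ν : V → Bool, IsValidProfile G μ → IsValidProfile G ν →
    (∀ v ∈ D, μ v = ν v) → μ = ν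

/-- The graph constructed from a set `S` of positive integers: for each `x ∈ S`
there is one connected component whose vertices are `Fin 2 × Fin (2 * x)`
(two cliques `C¹ = {0} × Fin (2x)` and `C² = {1} × Fin (2x)`, with counterpart map
`(0, j) ↔ (1, j)`).  Within a component, two vertices are adjacent iff their
`Fin (2x)`-indices differ: this makes each `Cᶜ` a clique of size `2x` and joins every
vertex of `C¹` to every vertex of `C²` except its counterpart.  Distinct components
are not joined. -/
def sppGraph (S : Finset ℕ) :
    SimpleGraph (Σ x : {x // x ∈ S}, Fin 2 × Fin (2 * x.val)) where
  Adj a b := a.1 = b.1 ∧ (a.2.2 : ℕ) ≠ (b.2.2 : ℕ)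
  symm := by
    refine ⟨?_⟩; rintro a b ⟨h1, h2⟩
    exact ⟨h1.symm, h2.symm⟩
  loopless := by
    refine ⟨?_⟩; rintro a ⟨-, h⟩
    exact h rfl

/-- The graph `G'` built from `G`: two disjoint copies `G × {0}` and `G × {1}` of `G`,
plus two extra vertices `v₁ = Sum.inr 0` and `v₂ = Sum.inr 1`, where `vᵢ` is joined to
every vertex of copy `i`, and `v₁` is joined to `v₂`. -/
def doubledGraph {V : Type*} (G : SimpleGraph V) : SimpleGraph (V × Fin 2 ⊕ Fin 2) where
  Adj x y :=
    match x, y with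
    | Sum.inl (a, i), Sum.inl (b, j) => i = j ∧ G.Adj a b
    | Sum.inl (_, i), Sum.inr j => i = j
    | Sum.inr i, Sum.inl (_, j) => i = j
    | Sum.inr i, Sum.inr j => i ≠ j
  symm := by
    refine ⟨?_⟩; rintro (⟨a, i⟩ | i) (⟨b, j⟩ | j) h
    · exact ⟨h.1.symm, h.2.symm⟩
    · exact h.symm
    · exact h.symm
    · exact Ne.symm h
  loopless := by
    refine ⟨?_⟩; rintro (⟨a, i⟩ | i) h
    · exact G.irrefl h.2
    · exact h rfl

/-!
In a valid profile every block `{x} × Fin 2 × Fin (2x)` of a copy of `sppGraph S` is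
monochromatic: if both colours occurred, the majority conditions at a vertex of each colour would
make the two colour classes of the block differ by exactly the hub's single vote, although the
block has even size. Conversely, blockwise constant colourings are valid at all block vertices.
A copy whose true blocks are those of `T ⊆ S` has `4 ∑ T` true and `4 ∑ (S \ T)` false
vertices, so its hub is forced unless these agree.

Without an equal-sum partition every hub is forced, so one vertex per block (`2k` vertices) is an
IDS. With a partition `T`, colouring the blocks by `T` leaves both hubs free, so an IDS contains a
hub; and it meets every block, since a single block weighs at most half of `S` and can be flipped
while the hubs stay put. Together that is more than `2k` vertices.
-/

open Finset Function

theorem IsValidProfile.eq_of_card_lt {V : Type*} [Fintype V] {G : SimpleGraph V}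
    {μ : V → Bool} (hμ : IsValidProfile G μ) {v : V} {b : Bool}
    (h : #{u ∈ G.neighborFinset v | μ u ≠ b} < #{u ∈ G.neighborFinset v | μ u = b}) :
    μ v = b := by
  by_contra hvb
  have hflip : ∀ u, (μ u = μ v ↔ μ u ≠ b) ∧ (μ u ≠ μ v ↔ μ u = b) := by
    intro u; cases hu : μ u <;> cases b <;> simp_all
  have := hμ v
  simp only [hflip] at this
  omega

theorem Finset.card_filter_cons_map {α β : Type*} (p : β → Prop) [DecidablePred p]
    (f : α ↪ β) (s : Finset α) {w : β} (hw : w ∉ s.map f) :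
    #{u ∈ cons w (s.map f) hw | p u} = #{a ∈ s | p (f a)} + if p w then 1 else 0 := by
  simp only [card_filter, sum_cons, sum_map]
  omega

/-- `N q` are the neighbours of `q` inside its block (all but `q` and possibly `twin q`), and `h` is
the colour of a hub adjacent to the whole block. -/
theorem eq_of_forall_majority_of_even_card {α : Type*} [Fintype α] (N : α → Finset α)
    (twin : α → α) (hN : ∀ q, q ∉ N q) (htwin : ∀ q p, p ∉ N q → p = q ∨ p = twin q)
    (heven : Even (Fintype.card α)) (β : α → Bool) (h : Bool)
    (hmaj : ∀ q, #{p ∈ N q | β p ≠ β q} + (if h ≠ β q then 1 else 0) ≤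
      #{p ∈ N q | β p = β q} + (if h = β q then 1 else 0)) (p q : α) :
    β p = β q := by
  have key : ∀ q, #{r | β r = !β q} + (if h = !β q then 1 else 0) ≤
      #{r | β r = β q} + (if h = β q then 1 else 0) := by
    intro q
    have hsame : #{r ∈ N q | β r = β q} + 1 ≤ #{r | β r = β q} := by
      rw [← card_insert_of_notMem fun hq => hN q (mem_filter.1 hq).1]
      exact card_le_card (insert_subset (by simp) (filter_subset_filter _ (subset_univ _)))
    have hopp : #{r | β r = !β q} ≤ #{r ∈ N q | β r = !β q} + 1 := by
      refine (card_le_card fun r hr => ?_).trans (card_insert_le (twin q) _)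
      rw [mem_filter] at hr
      by_cases hrN : r ∈ N q
      · exact mem_insert_of_mem (mem_filter.2 ⟨hrN, hr.2⟩)
      · rcases htwin q r hrN with rfl | rfl
        · simp at hr
        · exact mem_insert_self _ _
    have := hmaj q
    simp only [← Bool.eq_not] at this
    omega
  by_contra hpq
  have hp : β p = !β q := Bool.eq_not.mpr hpq
  have hkp := key p
  simp only [hp, Bool.not_not] at hkp
  have hq := key q
  have hsplit : #{r | β r = β q} + #{r | β r = !β q} = Fintype.card α := by
    simp only [Bool.eq_not, ← card_univ]
    exact card_filter_add_card_filter_not _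
  obtain ⟨m, hm⟩ := heven
  by_cases hh : h = β q <;> simp [hh, Bool.eq_not] at hkp hq hsplit <;> omega

theorem le_sum_sdiff_singleton {S T : Finset ℕ} (hT : T ⊆ S)
    (hsum : ∑ x ∈ T, x = ∑ x ∈ S \ T, x) {x : ℕ} (hx : x ∈ S) :
    x ≤ ∑ y ∈ S \ {x}, y := by
  by_cases hxT : x ∈ T
  · calc x ≤ ∑ y ∈ T, y := single_le_sum (f := id) (fun _ _ => Nat.zero_le _) hxT
      _ = ∑ y ∈ S \ T, y := hsum
      _ ≤ ∑ y ∈ S \ {x}, y := sum_le_sum_of_subset (sdiff_subset_sdiff subset_rfl (by simpa))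
  · calc x ≤ ∑ y ∈ S \ T, y :=
          single_le_sum (f := id) (fun _ _ => Nat.zero_le _) (mem_sdiff.2 ⟨hx, hxT⟩)
      _ = ∑ y ∈ T, y := hsum.symm
      _ ≤ ∑ y ∈ S \ {x}, y :=
        sum_le_sum_of_subset fun y hy =>
          mem_sdiff.2 ⟨hT hy, fun h => hxT (mem_singleton.1 h ▸ hy)⟩

namespace doubledGraph

variable {V : Type*} [Fintype V] (G : SimpleGraph V)

theorem neighborFinset_inl (a : V) (i : Fin 2) :
    (doubledGraph G).neighborFinset (.inl (a, i)) =
      cons (.inr i) ((G.neighborFinset a).map ((Embedding.sectL V i).trans .inl)) (by simp) := by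
  ext (⟨b, j⟩ | j) <;> simp only [SimpleGraph.mem_neighborFinset] <;>
    simp [doubledGraph, eq_comm, and_comm]

theorem neighborFinset_inr (i : Fin 2) :
    (doubledGraph G).neighborFinset (.inr i) =
      cons (.inr (i + 1)) (univ.map ((Embedding.sectL V i).trans .inl)) (by simp) := by
  ext (⟨b, j⟩ | j) <;> simp only [SimpleGraph.mem_neighborFinset] <;>
    simp [doubledGraph, eq_comm]
  revert i j; decide

variable {G} {μ ν : V × Fin 2 ⊕ Fin 2 → Bool} {i : Fin 2}

theorem card_neighborFinset_inr_filter (p : V × Fin 2 ⊕ Fin 2 → Prop) [DecidablePred p] :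
    #{u ∈ (doubledGraph G).neighborFinset (.inr i) | p u} =
      #{a | p (.inl (a, i))} + if p (.inr (i + 1)) then 1 else 0 := by
  rw [neighborFinset_inr, card_filter_cons_map]
  rfl

theorem majority_inr (hhub : μ (.inr (i + 1)) = μ (.inr i))
    (hbal : #{a | μ (.inl (a, i)) ≠ μ (.inr i)} ≤ #{a | μ (.inl (a, i)) = μ (.inr i)} + 1) :
    #{u ∈ (doubledGraph G).neighborFinset (.inr i) | μ u = μ (.inr i)} ≥
      #{u ∈ (doubledGraph G).neighborFinset (.inr i) | μ u ≠ μ (.inr i)} := by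
  simp only [card_neighborFinset_inr_filter, hhub, ne_eq, not_true, if_true, if_false]
  omega

theorem _root_.IsValidProfile.inr_eq_of_card_lt (hμ : IsValidProfile (doubledGraph G) μ)
    {b : Bool} (h : #{a | μ (.inl (a, i)) ≠ b} + 1 < #{a | μ (.inl (a, i)) = b}) :
    μ (.inr i) = b := by
  refine hμ.eq_of_card_lt ?_
  simp only [card_neighborFinset_inr_filter]
  split_ifs <;> omega

theorem _root_.IsValidProfile.inr_eq_inr (hμ : IsValidProfile (doubledGraph G) μ)
    (hν : IsValidProfile (doubledGraph G) ν) (hcopy : ∀ a, μ (.inl (a, i)) = ν (.inl (a, i)))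
    (hunbal : #{a | μ (.inl (a, i)) = false} + 1 < #{a | μ (.inl (a, i)) = true} ∨
      #{a | μ (.inl (a, i)) = true} + 1 < #{a | μ (.inl (a, i)) = false}) :
    μ (.inr i) = ν (.inr i) := by
  rcases hunbal with h | h
  · rw [hμ.inr_eq_of_card_lt (b := true) (by simpa),
      hν.inr_eq_of_card_lt (b := true) (by simpa [← hcopy])]
  · rw [hμ.inr_eq_of_card_lt (b := false) (by simpa),
      hν.inr_eq_of_card_lt (b := false) (by simpa [← hcopy])]

end doubledGraph

abbrev SppVertex (S : Finset ℕ) : Type := Σ x : {x // x ∈ S}, Fin 2 × Fin (2 * x.val)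

section sppGraph

variable {S T : Finset ℕ} {μ : SppVertex S × Fin 2 ⊕ Fin 2 → Bool}
  {D : Set (SppVertex S × Fin 2 ⊕ Fin 2)}

theorem sppGraph_neighborFinset (x : {x // x ∈ S}) (q : Fin 2 × Fin (2 * x.val)) :
    (sppGraph S).neighborFinset ⟨x, q⟩ =
      ({r | r.2 ≠ q.2} : Finset _).map (Embedding.sigmaMk x) := by
  ext ⟨y, r⟩
  simp only [SimpleGraph.mem_neighborFinset, mem_map, mem_filter, mem_univ, true_and]
  constructor
  · rintro ⟨rfl, h⟩
    exact ⟨r, fun h' => h (h' ▸ rfl), rfl⟩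
  · rintro ⟨r', hr', h⟩
    simp only [Embedding.sigmaMk_apply, Sigma.mk.injEq] at h
    obtain ⟨rfl, h⟩ := h
    obtain rfl := eq_of_heq h
    exact ⟨rfl, fun h' => hr' (Fin.ext h'.symm)⟩

theorem card_filter_fst_fst (P : ℕ → Prop) [DecidablePred P] :
    #{a : SppVertex S | P a.1} = 4 * ∑ x ∈ S with P x, x := by
  rw [← univ_sigma_univ, filter_sigma, card_sigma, mul_sum, sum_filter, ← sum_coe_sort S]
  refine sum_congr rfl fun x _ => ?_
  by_cases hx : P x <;> simp [hx, filter_true_of_mem, filter_false_of_mem]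
  ring

theorem card_neighborFinset_inl_filter (p : _ → Prop) [DecidablePred p] (x : {x // x ∈ S})
    (q : Fin 2 × Fin (2 * x.val)) (c : Fin 2) :
    #{u ∈ (doubledGraph (sppGraph S)).neighborFinset (.inl (⟨x, q⟩, c)) | p u} =
      #{r ∈ ({r | r.2 ≠ q.2} : Finset _) | p (.inl (⟨x, r⟩, c))} +
        if p (.inr c) then 1 else 0 := by
  rw [doubledGraph.neighborFinset_inl, card_filter_cons_map, sppGraph_neighborFinset, filter_map,
    card_map]
  rfl

theorem IsValidProfile.inl_eq_inl (hμ : IsValidProfile (doubledGraph (sppGraph S)) μ)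
    (x : {x // x ∈ S}) (c : Fin 2) (p q : Fin 2 × Fin (2 * x.val)) :
    μ (.inl (⟨x, p⟩, c)) = μ (.inl (⟨x, q⟩, c)) := by
  refine eq_of_forall_majority_of_even_card (fun q => {r | r.2 ≠ q.2}) (fun q => (q.1 + 1, q.2))
    (by simp) ?_ ⟨2 * x.val, by simp; ring⟩ (fun r => μ (.inl (⟨x, r⟩, c))) (μ (.inr c))
    (fun q => ?_) p q
  · rintro ⟨q₁, q₂⟩ ⟨r₁, r₂⟩ hr
    simp only [mem_filter, mem_univ, true_and, not_not] at hr
    subst hr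
    fin_cases q₁ <;> fin_cases r₁ <;> simp
  · have := hμ (.inl (⟨x, q⟩, c))
    rwa [card_neighborFinset_inl_filter, card_neighborFinset_inl_filter] at this

theorem majority_inl {x : {x // x ∈ S}} (hx : 0 < x.val) {q : Fin 2 × Fin (2 * x.val)}
    {c : Fin 2} (hblock : ∀ r, μ (.inl (⟨x, r⟩, c)) = μ (.inl (⟨x, q⟩, c))) :
    #{u ∈ (doubledGraph (sppGraph S)).neighborFinset (.inl (⟨x, q⟩, c)) |
        μ u = μ (.inl (⟨x, q⟩, c))} ≥
      #{u ∈ (doubledGraph (sppGraph S)).neighborFinset (.inl (⟨x, q⟩, c)) |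
        μ u ≠ μ (.inl (⟨x, q⟩, c))} := by
  obtain ⟨j, hj⟩ := Fintype.exists_ne_of_one_lt_card (by simp; omega) q.2
  rw [card_neighborFinset_inl_filter, card_neighborFinset_inl_filter]
  have hsame : 0 < #{r ∈ ({r | r.2 ≠ q.2} : Finset _) |
      μ (.inl (⟨x, r⟩, c)) = μ (.inl (⟨x, q⟩, c))} :=
    card_pos.2 ⟨(q.1, j), by simp [hj, hblock]⟩
  have hopp : #{r ∈ ({r | r.2 ≠ q.2} : Finset _) |
      μ (.inl (⟨x, r⟩, c)) ≠ μ (.inl (⟨x, q⟩, c))} = 0 := by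
    simp [hblock]
  split_ifs <;> omega

theorem isValidProfile_of_block_const (hpos : ∀ x ∈ S, 0 < x)
    (hblock : ∀ x c p q, μ (.inl (⟨x, p⟩, c)) = μ (.inl (⟨x, q⟩, c)))
    (hhub : ∀ i, μ (.inr (i + 1)) = μ (.inr i))
    (hbal : ∀ i, #{a | μ (.inl (a, i)) ≠ μ (.inr i)} ≤
      #{a | μ (.inl (a, i)) = μ (.inr i)} + 1) :
    IsValidProfile (doubledGraph (sppGraph S)) μ := by
  rintro (⟨⟨x, q⟩, c⟩ | i)
  · exact majority_inl (hpos x x.2) fun r => hblock x c r q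
  · exact doubledGraph.majority_inr (hhub i) (hbal i)

theorem card_filter_fst_mem {T : Finset ℕ} (hT : T ⊆ S) :
    #{a : SppVertex S | (a.1 : ℕ) ∈ T} = 4 * ∑ x ∈ T, x := by
  rw [card_filter_fst_fst (· ∈ T), filter_mem_eq_inter, inter_eq_right.2 hT]

theorem card_filter_fst_not_mem (T : Finset ℕ) :
    #{a : SppVertex S | (a.1 : ℕ) ∉ T} = 4 * ∑ x ∈ S \ T, x := by
  rw [card_filter_fst_fst (· ∉ T), sdiff_eq_filter]

theorem IsValidProfile.exists_subset_forall_eq_true_iff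
    (hμ : IsValidProfile (doubledGraph (sppGraph S)) μ) (i : Fin 2) :
    ∃ T ⊆ S, ∀ a, μ (.inl (a, i)) = true ↔ (a.1 : ℕ) ∈ T := by
  refine ⟨({a | μ (.inl (a, i)) = true} : Finset _).image fun a => (a.1 : ℕ), ?_, ?_⟩
  · intro y hy
    obtain ⟨a, -, rfl⟩ := mem_image.1 hy
    exact a.1.2
  · rintro ⟨x, p⟩
    simp only [mem_image, mem_filter, mem_univ, true_and]
    refine ⟨fun h => ⟨_, h, rfl⟩, ?_⟩
    rintro ⟨⟨x', p'⟩, h, hx⟩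
    obtain rfl := Subtype.ext hx
    rwa [hμ.inl_eq_inl _ i p p']

theorem isIDS_of_forall_block_mem (hpart : ∀ T ⊆ S, ∑ x ∈ T, x ≠ ∑ x ∈ S \ T, x)
    (hD : ∀ x c, ∃ p, .inl (⟨x, p⟩, c) ∈ D) : IsIDS (doubledGraph (sppGraph S)) D := by
  intro μ ν hμ hν hagree
  have hinl : ∀ x p c, μ (.inl (⟨x, p⟩, c)) = ν (.inl (⟨x, p⟩, c)) := by
    intro x p c
    obtain ⟨p₀, hp₀⟩ := hD x c
    rw [hμ.inl_eq_inl x c p p₀, hν.inl_eq_inl x c p p₀]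
    exact hagree _ hp₀
  funext v
  rcases v with ⟨⟨x, p⟩, c⟩ | i
  · exact hinl x p c
  refine hμ.inr_eq_inr hν (fun a => hinl a.1 a.2 i) ?_
  obtain ⟨T, hT, hμT⟩ := hμ.exists_subset_forall_eq_true_iff i
  have htrue : #{a | μ (.inl (a, i)) = true} = 4 * ∑ x ∈ T, x := by
    simp only [hμT]
    exact card_filter_fst_mem hT
  have hfalse : #{a | μ (.inl (a, i)) = false} = 4 * ∑ x ∈ S \ T, x := by
    simp only [← Bool.not_eq_true, hμT]
    exact card_filter_fst_not_mem T
  have := hpart T hT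
  omega

theorem exists_inr_mem_of_isIDS (hpos : ∀ x ∈ S, 0 < x) (hT : T ⊆ S)
    (hsum : ∑ x ∈ T, x = ∑ x ∈ S \ T, x) (hD : IsIDS (doubledGraph (sppGraph S)) D) :
    ∃ i, .inr i ∈ D := by
  by_contra! hinr
  let μ (b : Bool) : SppVertex S × Fin 2 ⊕ Fin 2 → Bool :=
    Sum.elim (fun z => decide ((z.1.1 : ℕ) ∈ T)) fun _ => b
  have hμ (b : Bool) : IsValidProfile (doubledGraph (sppGraph S)) (μ b) := by
    refine isValidProfile_of_block_const hpos (fun _ _ _ _ => rfl) (fun _ => rfl) fun i => ?_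
    have h₁ := card_filter_fst_mem hT
    have h₂ := card_filter_fst_not_mem (S := S) T
    cases b <;> simp [μ] <;> omega
  have := hD (μ false) (μ true) (hμ false) (hμ true) (by
    rintro (_ | i) hv
    · rfl
    · exact absurd hv (hinr i))
  simpa [μ] using congrFun this (.inr 0)

theorem forall_block_mem_of_isIDS (hpos : ∀ x ∈ S, 0 < x) (hT : T ⊆ S)
    (hsum : ∑ x ∈ T, x = ∑ x ∈ S \ T, x) (hD : IsIDS (doubledGraph (sppGraph S)) D)
    (x : {x // x ∈ S}) (c : Fin 2) : ∃ p, .inl (⟨x, p⟩, c) ∈ D := by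
  by_contra! hx
  let ν : SppVertex S × Fin 2 ⊕ Fin 2 → Bool :=
    Sum.elim (fun z => decide (z.2 = c ∧ z.1.1 = x)) fun _ => false
  have hν : IsValidProfile (doubledGraph (sppGraph S)) ν := by
    refine isValidProfile_of_block_const hpos (fun _ _ _ _ => rfl) (fun _ => rfl) fun i => ?_
    have hle : #{a : SppVertex S | i = c ∧ a.1 = x} ≤
        #{a : SppVertex S | (a.1 : ℕ) ∈ ({x.1} : Finset ℕ)} :=
      card_le_card fun a ha => by
        simp only [mem_filter, mem_univ, true_and, mem_singleton] at ha ⊢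
        rw [ha.2]
    have hge : #{a : SppVertex S | (a.1 : ℕ) ∉ ({x.1} : Finset ℕ)} ≤
        #{a : SppVertex S | ¬(i = c ∧ a.1 = x)} :=
      card_le_card fun a ha => by
        simp only [mem_filter, mem_univ, true_and, mem_singleton] at ha ⊢
        exact fun h => ha (by rw [h.2])
    rw [card_filter_fst_mem (singleton_subset_iff.2 x.2), sum_singleton] at hle
    rw [card_filter_fst_not_mem] at hge
    have := le_sum_sdiff_singleton hT hsum x.2
    simp only [ν, Sum.elim_inl, Sum.elim_inr, ne_eq, decide_eq_false_iff_not, not_not]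
    omega
  have := hD (fun _ => false) ν
    (isValidProfile_of_block_const hpos (fun _ _ _ _ => rfl) (fun _ => rfl) (by simp)) hν (by
      rintro (⟨⟨y, p⟩, d⟩ | i) hv
      · refine (decide_eq_false ?_).symm
        rintro ⟨rfl, rfl⟩
        exact hx p hv
      · rfl)
  have hpos' := hpos x x.2
  simpa [ν] using congrFun this (.inl (⟨x, (0, ⟨0, by omega⟩)⟩, c))

theorem two_mul_card_lt_card {D : Finset (SppVertex S × Fin 2 ⊕ Fin 2)}
    (hD : ∀ x c, ∃ p, .inl (⟨x, p⟩, c) ∈ D) {i : Fin 2} (hi : .inr i ∈ D) :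
    2 * #S < #D := by
  choose p hp using hD
  have := card_le_card_of_injOn (s := univ) (t := D.erase (.inr i))
    (fun z : {x // x ∈ S} × Fin 2 => .inl (⟨z.1, p z.1 z.2⟩, z.2))
    (fun z _ => mem_erase.2 ⟨Sum.inl_ne_inr, hp z.1 z.2⟩)
    (fun z _ w _ h => by
      simp only [Sum.inl.injEq, Prod.mk.injEq] at h
      exact Prod.ext (congrArg Sigma.fst h.1) h.2)
  rw [card_univ, Fintype.card_prod, Fintype.card_coe, Fintype.card_fin,
    card_erase_of_mem hi] at this
  have := card_pos.2 ⟨_, hi⟩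
  omega

theorem exists_forall_block_mem_card_le (hpos : ∀ x ∈ S, 0 < x) :
    ∃ D : Finset (SppVertex S × Fin 2 ⊕ Fin 2),
      (∀ x c, ∃ p, .inl (⟨x, p⟩, c) ∈ D) ∧ #D ≤ 2 * #S := by
  let corner (x : {x // x ∈ S}) : Fin 2 × Fin (2 * x.val) :=
    (0, ⟨0, by have := hpos x x.2; omega⟩)
  refine ⟨univ.image fun z : {x // x ∈ S} × Fin 2 => .inl (⟨z.1, corner z.1⟩, z.2),
    fun x c => ⟨corner x, mem_image.2 ⟨(x, c), mem_univ _, rfl⟩⟩, ?_⟩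
  refine card_image_le.trans ?_
  simp [mul_comm]

end sppGraph

/-- a set `S` of `k` positive integers has an equal-sum partition iff
there is no information dominating set of size at most `2k` in the graph `G'`
obtained by applying the two-copies-plus-`v₁,v₂` construction to the graph built
from `S`. -/
theorem equal_sum_partition_iff_no_small_ids
    (S : Finset ℕ) (k : ℕ) (hcard : S.card = k) (hpos : ∀ x ∈ S, 0 < x) :
    (∃ T ⊆ S, ∑ x ∈ T, x = ∑ x ∈ S \ T, x) ↔
    ¬ ∃ D : Finset ((Σ x : {x // x ∈ S}, Fin 2 × Fin (2 * x.val)) × Fin 2 ⊕ Fin 2),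
        IsIDS (doubledGraph (sppGraph S)) ↑D ∧ D.card ≤ 2 * k := by
  subst hcard
  constructor
  · rintro ⟨T, hT, hsum⟩ ⟨D, hD, hcard⟩
    obtain ⟨i, hi⟩ := exists_inr_mem_of_isIDS hpos hT hsum hD
    have := two_mul_card_lt_card (forall_block_mem_of_isIDS hpos hT hsum hD) hi
    omega
  · intro hnoD
    by_contra hnoT
    obtain ⟨D, hblock, hcard⟩ := exists_forall_block_mem_card_le hpos
    exact hnoD
      ⟨D, isIDS_of_forall_block_mem (fun T hT hsum => hnoT ⟨T, hT, hsum⟩) hblock, hcard⟩
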